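/- π/2-shift symmetry of the QAOA cost function in the mixing angles: for every p ≥ 1, every (β,γ) ∈ ℝ^p × ℝ^p and every 1 ≤ l ≤ p, replacing β_l by β_l + π/2 leaves E_p unchanged. (This follows from exp(-i(π/2)H_B) being proportional to the global spin flip X^{⊗n} = σ^x_1 σ^x_2 ⋯ σ^x_n, which commutes with both H_C and H_B.) -/

import Mathlib

/-!
Since `(σˣᵢ)² = 1`, `exp (-i (π/2) H_B) = ∏ᵢ exp (i (π/2) σˣᵢ) = iⁿ X^{⊗n}`. The global flip
`X^{⊗n}` commutes with every `σˣᵢ` and, anticommuting with each `σᶻᵢ`, with every `σᶻᵢ σᶻⱼ`; hence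
it commutes with all layers of the circuit, and it fixes `|+⟩`. So shifting `β_l` by `π/2`
multiplies the QAOA state by the phase `iⁿ`, which cancels in `⟨β,γ| H_C |β,γ⟩`.
-/

open Matrix Complex

noncomputable section

/-- Computational basis index set for `n` qubits, identified with `Fin 2 ^ n` via binary digits. -/
abbrev QIdx (n : ℕ) := Fin n → Fin 2

/-- The Pauli X matrix. -/
def pauliX : Matrix (Fin 2) (Fin 2) ℂ := !![0, 1; 1, 0]

/-- The Pauli Z matrix. -/
def pauliZ : Matrix (Fin 2) (Fin 2) ℂ := !![1, 0; 0, -1]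

/-- The `n`-fold Kronecker product with `M` in the `i`-th tensor factor and the 2×2 identity in
every other factor, realized as a matrix on `ℂ^(2^n)` with indices `Fin n → Fin 2`. -/
def pauliAt {n : ℕ} (M : Matrix (Fin 2) (Fin 2) ℂ) (i : Fin n) :
    Matrix (QIdx n) (QIdx n) ℂ :=
  Matrix.of fun s t => ∏ j, if j = i then M (s j) (t j) else if s j = t j then 1 else 0

/-- `σ^x_i`. -/
def sigmaX {n : ℕ} (i : Fin n) : Matrix (QIdx n) (QIdx n) ℂ := pauliAt pauliX i

/-- `σ^z_i`. -/
def sigmaZ {n : ℕ} (i : Fin n) : Matrix (QIdx n) (QIdx n) ℂ := pauliAt pauliZ i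

lemma sigmaZ_eq_diagonal {n : ℕ} (i : Fin n) :
    sigmaZ i = Matrix.diagonal (fun s => pauliZ (s i) (s i)) := by
  ext s t
  simp only [sigmaZ, pauliAt, Matrix.of_apply, Matrix.diagonal_apply]
  by_cases h : s = t
  · subst h
    simp [Finset.prod_ite_eq']
  · rw [if_neg h]
    obtain ⟨j₀, hj₀⟩ := Function.ne_iff.mp h
    refine Finset.prod_eq_zero (Finset.mem_univ j₀) ?_
    by_cases hji : j₀ = i
    · subst hji
      rw [if_pos rfl]
      have hz : ∀ a b : Fin 2, a ≠ b → pauliZ a b = 0 := by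
        intro a b hab
        fin_cases a <;> fin_cases b <;> simp_all [pauliZ]
      exact hz _ _ hj₀
    · rw [if_neg hji, if_neg hj₀]

lemma sigmaZ_mul_comm {n : ℕ} (i j : Fin n) : sigmaZ i * sigmaZ j = sigmaZ j * sigmaZ i := by
  rw [sigmaZ_eq_diagonal, sigmaZ_eq_diagonal, Matrix.diagonal_mul_diagonal,
    Matrix.diagonal_mul_diagonal]
  ext s
  simp [mul_comm]

/-- The MaxCut Hamiltonian `H_C = Σ_{{i,j} ∈ E} σ^z_i σ^z_j`. -/
def hamC (n : ℕ) (G : SimpleGraph (Fin n)) [DecidableRel G.Adj] :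
    Matrix (QIdx n) (QIdx n) ℂ :=
  ∑ e ∈ G.edgeFinset,
    Sym2.lift ⟨fun i j => sigmaZ i * sigmaZ j, fun i j => sigmaZ_mul_comm i j⟩ e

/-- The mixing Hamiltonian `H_B = -Σ_i σ^x_i`. -/
def hamB (n : ℕ) : Matrix (QIdx n) (QIdx n) ℂ := -(∑ i : Fin n, sigmaX i)

/-- `U_B(β) = exp(-i β H_B)`. -/
def uB (n : ℕ) (β : ℝ) : Matrix (QIdx n) (QIdx n) ℂ :=
  NormedSpace.exp ((-(Complex.I) * (β : ℂ)) • hamB n)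

/-- `U_C(γ) = exp(-i γ H_C)`. -/
def uC (n : ℕ) (G : SimpleGraph (Fin n)) [DecidableRel G.Adj] (γ : ℝ) :
    Matrix (QIdx n) (QIdx n) ℂ :=
  NormedSpace.exp ((-(Complex.I) * (γ : ℂ)) • hamC n G)

/-- The plus state `|+⟩ = 2^{-n/2} (1,…,1)ᵀ`. -/
def plusState (n : ℕ) : QIdx n → ℂ := fun _ => ((Real.sqrt 2 : ℂ))⁻¹ ^ n

/-- The `m`-th layer `U_B(β_{m+1}) U_C(γ_{m+1})` of the QAOA circuit (`m` is 0-indexed);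
`1` if `m` is out of range. -/
def qaoaLayer (n : ℕ) (G : SimpleGraph (Fin n)) [DecidableRel G.Adj] {p : ℕ}
    (β γ : Fin p → ℝ) (m : ℕ) : Matrix (QIdx n) (QIdx n) ℂ :=
  if h : m < p then uB n (β ⟨m, h⟩) * uC n G (γ ⟨m, h⟩) else 1

/-- The ordered product of the (0-indexed) layers `a, a+1, …, a+len-1` of the QAOA circuit, with
higher layers acting later (to the left). -/
def uProd (n : ℕ) (G : SimpleGraph (Fin n)) [DecidableRel G.Adj] {p : ℕ}
    (β γ : Fin p → ℝ) (a len : ℕ) : Matrix (QIdx n) (QIdx n) ℂ :=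
  (((List.range' a len).reverse).map (qaoaLayer n G β γ)).prod

/-- The depth-`p` QAOA state `|β,γ⟩ = U_B(β_p) U_C(γ_p) ⋯ U_B(β_1) U_C(γ_1) |+⟩`. -/
def qaoaState (n : ℕ) (G : SimpleGraph (Fin n)) [DecidableRel G.Adj] {p : ℕ}
    (β γ : Fin p → ℝ) : QIdx n → ℂ :=
  (uProd n G β γ 0 p).mulVec (plusState n)

/-- The depth-`p` QAOA cost function `E_p(β,γ) = ⟨β,γ| H_C |β,γ⟩` as a real-valued function on
`ℝ^p × ℝ^p`. -/
def energyE (n : ℕ) (G : SimpleGraph (Fin n)) [DecidableRel G.Adj] (p : ℕ)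
    (x : (Fin p → ℝ) × (Fin p → ℝ)) : ℝ :=
  (star (qaoaState n G x.1 x.2) ⬝ᵥ (hamC n G).mulVec (qaoaState n G x.1 x.2)).re

/-- The point `Γ^{p+1}(i,j)` obtained from `(β⋆,γ⋆) ∈ ℝ^p × ℝ^p` by inserting a `0` at
position `i` in the `β`-part and at position `j` in the `γ`-part. -/
def padded {p : ℕ} (x : (Fin p → ℝ) × (Fin p → ℝ)) (i j : Fin (p + 1)) :
    (Fin (p + 1) → ℝ) × (Fin (p + 1) → ℝ) :=
  (i.insertNth 0 x.1, j.insertNth 0 x.2)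

/-- The coordinate direction in `ℝ^p × ℝ^p` corresponding to `β_l` (`Sum.inl l`) or
`γ_l` (`Sum.inr l`). -/
def coordDir {p : ℕ} : Fin p ⊕ Fin p → (Fin p → ℝ) × (Fin p → ℝ) :=
  Sum.elim (fun l => (Pi.single l 1, 0)) (fun l => (0, Pi.single l 1))

/-- Partial derivative of a real function on `ℝ^p × ℝ^p` in the coordinate direction `a`. -/
def pderiv' {p : ℕ} (f : ((Fin p → ℝ) × (Fin p → ℝ)) → ℝ)
    (a : Fin p ⊕ Fin p) (x : (Fin p → ℝ) × (Fin p → ℝ)) : ℝ :=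
  fderiv ℝ f x (coordDir a)

/-- The Hessian matrix of a real function on `ℝ^p × ℝ^p`, with rows and columns indexed by the
coordinates `β_1,…,β_p` (`Sum.inl`) and `γ_1,…,γ_p` (`Sum.inr`). -/
def hessian {p : ℕ} (f : ((Fin p → ℝ) × (Fin p → ℝ)) → ℝ)
    (x : (Fin p → ℝ) × (Fin p → ℝ)) : Matrix (Fin p ⊕ Fin p) (Fin p ⊕ Fin p) ℝ :=
  Matrix.of fun a b => pderiv' (pderiv' f b) a x

/-- The commutator `[A, B] = AB - BA`. -/
def commMat {n : ℕ} (A B : Matrix (QIdx n) (QIdx n) ℂ) : Matrix (QIdx n) (QIdx n) ℂ :=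
  A * B - B * A

end

section InvolutionExp

open NormedSpace

variable {𝔸 : Type*} [NormedRing 𝔸] [NormedAlgebra ℂ 𝔸] [CompleteSpace 𝔸]

-- The even and odd parts of the exponential series are the series of `cosh` and `sinh`.
theorem exp_smul_eq_cosh_add_sinh_of_mul_self_eq_one {a : 𝔸} (ha : a * a = 1) (z : ℂ) :
    exp (z • a) = Complex.cosh z • 1 + Complex.sinh z • a := by
  have hpow : ∀ k, a ^ (2 * k) = 1 := fun k => by rw [pow_mul, sq, ha, one_pow]
  refine (exp_series_hasSum_exp' (𝕂 := ℂ) (z • a)).unique (HasSum.even_add_odd ?_ ?_)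
  · convert (Complex.hasSum_cosh z).smul_const (1 : 𝔸) using 2 with k
    rw [smul_pow, hpow, smul_smul, div_eq_inv_mul]
  · convert (Complex.hasSum_sinh z).smul_const a using 2 with k
    rw [smul_pow, pow_succ a, hpow, one_mul, smul_smul, div_eq_inv_mul]

theorem exp_I_mul_pi_div_two_smul_of_mul_self_eq_one {a : 𝔸} (ha : a * a = 1) :
    exp ((I * (Real.pi / 2 : ℝ)) • a) = I • a := by
  rw [exp_smul_eq_cosh_add_sinh_of_mul_self_eq_one ha, mul_comm, cosh_mul_I, sinh_mul_I,
    ← ofReal_cos, ← ofReal_sin, Real.cos_pi_div_two, Real.sin_pi_div_two]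
  simp

end InvolutionExp

namespace Matrix

variable {ι κ R : Type*} [Fintype ι] [CommSemiring R]

def piKron (f : ι → Matrix κ κ R) : Matrix (ι → κ) (ι → κ) R :=
  of fun s t => ∏ j, f j (s j) (t j)

theorem piKron_apply (f : ι → Matrix κ κ R) (s t : ι → κ) :
    piKron f s t = ∏ j, f j (s j) (t j) := rfl

theorem piKron_mul [DecidableEq ι] [Fintype κ] (f g : ι → Matrix κ κ R) :
    piKron f * piKron g = piKron (f * g) := by
  ext s t
  simp only [mul_apply, piKron_apply, Pi.mul_apply, Finset.prod_univ_sum, Fintype.piFinset_univ,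
    Finset.prod_mul_distrib]

theorem piKron_one [DecidableEq κ] : piKron (1 : ι → Matrix κ κ R) = 1 := by
  ext s t
  simp only [piKron_apply, Pi.one_apply, one_apply, Finset.prod_ite_zero, Finset.prod_const_one,
    Finset.mem_univ, true_implies, funext_iff]

theorem piKron_smul (c : ι → R) (f : ι → Matrix κ κ R) :
    piKron (c • f) = (∏ j, c j) • piKron f := by
  ext s t
  simp only [piKron_apply, Pi.smul_apply', smul_apply, smul_eq_mul, Finset.prod_mul_distrib]

theorem piKron_mulVec_const [DecidableEq ι] [Fintype κ] (f : ι → Matrix κ κ R) (x : R) :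
    piKron f *ᵥ (fun _ => x) = fun s => (∏ j, ∑ b, f j (s j) b) * x := by
  ext s
  simp only [mulVec, dotProduct, piKron_apply, ← Finset.sum_mul, Finset.prod_univ_sum,
    Fintype.piFinset_univ]

def piKronHom [DecidableEq ι] [Fintype κ] [DecidableEq κ] :
    (ι → Matrix κ κ R) →* Matrix (ι → κ) (ι → κ) R where
  toFun := piKron
  map_one' := piKron_one
  map_mul' f g := (piKron_mul f g).symm

theorem noncommProd_piKron_mulSingle [DecidableEq ι] [Fintype κ] [DecidableEq κ]
    (f : ι → Matrix κ κ R) :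
    (Finset.univ.noncommProd (fun i => piKron (Pi.mulSingle i (f i))) fun i _ j _ _ =>
      (Pi.mulSingle_apply_commute f i j).map piKronHom) = piKron f := by
  have := Finset.map_noncommProd Finset.univ (fun i => Pi.mulSingle i (f i))
    (fun i _ j _ _ => Pi.mulSingle_apply_commute f i j) piKronHom
  rw [Finset.noncommProd_mulSingle] at this
  exact this.symm

end Matrix

section Pauli

variable {n : ℕ}

theorem pauliX_mul_self : pauliX * pauliX = 1 := by
  ext a b; fin_cases a <;> fin_cases b <;> simp [pauliX]

theorem pauliX_mul_pauliZ : pauliX * pauliZ = -(pauliZ * pauliX) := by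
  ext a b; fin_cases a <;> fin_cases b <;> simp [pauliX, pauliZ]

theorem sum_pauliX_apply (a : Fin 2) : ∑ b, pauliX a b = (1 : ℂ) := by
  fin_cases a <;> simp [pauliX]

theorem pauliAt_eq_piKron (M : Matrix (Fin 2) (Fin 2) ℂ) (i : Fin n) :
    pauliAt M i = piKron (Pi.mulSingle (M := fun _ => Matrix (Fin 2) (Fin 2) ℂ) i M) := by
  ext s t
  simp only [pauliAt, piKron_apply, of_apply]
  refine Finset.prod_congr rfl fun j _ => ?_
  by_cases h : j = i
  · subst h; simp
  · simp [h, one_apply]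

theorem pauliAt_smul (c : ℂ) (M : Matrix (Fin 2) (Fin 2) ℂ) (i : Fin n) :
    pauliAt (c • M) i = c • pauliAt M i := by
  have : (Pi.mulSingle i (c • M) : Fin n → Matrix (Fin 2) (Fin 2) ℂ) =
      (Pi.mulSingle i c : Fin n → ℂ) •
        Pi.mulSingle (M := fun _ => Matrix (Fin 2) (Fin 2) ℂ) i M := by
    ext1 j; by_cases h : j = i <;> simp [h]
  rw [pauliAt_eq_piKron, pauliAt_eq_piKron, this, piKron_smul, Fintype.prod_pi_mulSingle']

theorem sigmaX_mul_self (i : Fin n) : sigmaX i * sigmaX i = 1 := by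
  rw [sigmaX, pauliAt_eq_piKron, piKron_mul, ← Pi.mulSingle_mul, pauliX_mul_self,
    Pi.mulSingle_one, piKron_one]

theorem commute_pauliAt (M : Matrix (Fin 2) (Fin 2) ℂ) (i j : Fin n) :
    Commute (pauliAt M i) (pauliAt M j) := by
  rw [pauliAt_eq_piKron, pauliAt_eq_piKron]
  exact (Pi.mulSingle_apply_commute (fun _ => M) i j).map piKronHom

theorem commute_sigmaX (i j : Fin n) : Commute (sigmaX i) (sigmaX j) :=
  commute_pauliAt pauliX i j

theorem noncommProd_pauliAt (M : Matrix (Fin 2) (Fin 2) ℂ) :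
    (Finset.univ.noncommProd (fun i : Fin n => pauliAt M i) fun i _ j _ _ =>
      commute_pauliAt M i j) = piKron (fun _ => M) := by
  simp only [pauliAt_eq_piKron]
  exact noncommProd_piKron_mulSingle _

end Pauli

section SpinFlip

variable {n : ℕ}

def spinFlip (n : ℕ) : Matrix (QIdx n) (QIdx n) ℂ := piKron fun _ => pauliX

theorem commute_spinFlip_sigmaX (i : Fin n) : Commute (spinFlip n) (sigmaX i) := by
  have h : Commute (fun _ => pauliX)
      (Pi.mulSingle i pauliX : Fin n → Matrix (Fin 2) (Fin 2) ℂ) := by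
    ext1 j; by_cases hj : j = i <;> simp [hj]
  rw [spinFlip, sigmaX, pauliAt_eq_piKron]
  exact h.map piKronHom

theorem spinFlip_mul_sigmaZ (i : Fin n) : spinFlip n * sigmaZ i = -(sigmaZ i * spinFlip n) := by
  have h : (fun _ => pauliX) * (Pi.mulSingle i pauliZ : Fin n → Matrix (Fin 2) (Fin 2) ℂ) =
      (Pi.mulSingle i (-1 : ℂ) : Fin n → ℂ) • (Pi.mulSingle i pauliZ * fun _ => pauliX) := by
    ext1 j; by_cases hj : j = i <;> simp [hj, pauliX_mul_pauliZ]
  rw [spinFlip, sigmaZ, pauliAt_eq_piKron, piKron_mul, piKron_mul, h, piKron_smul,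
    Fintype.prod_pi_mulSingle', neg_one_smul]

theorem commute_spinFlip_sigmaZ_mul_sigmaZ (i j : Fin n) :
    Commute (spinFlip n) (sigmaZ i * sigmaZ j) :=
  calc spinFlip n * (sigmaZ i * sigmaZ j)
      = -(sigmaZ i * (spinFlip n * sigmaZ j)) := by
        rw [← mul_assoc, spinFlip_mul_sigmaZ, neg_mul, mul_assoc]
    _ = sigmaZ i * sigmaZ j * spinFlip n := by
        rw [spinFlip_mul_sigmaZ, mul_neg, neg_neg, mul_assoc]

theorem commute_spinFlip_hamC (G : SimpleGraph (Fin n)) [DecidableRel G.Adj] :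
    Commute (spinFlip n) (hamC n G) := by
  refine Commute.sum_right _ _ _ fun e _ => ?_
  induction e using Sym2.ind with
  | _ i j => exact commute_spinFlip_sigmaZ_mul_sigmaZ i j

theorem commute_spinFlip_hamB : Commute (spinFlip n) (hamB n) :=
  (Commute.sum_right _ _ _ fun i _ => commute_spinFlip_sigmaX i).neg_right

theorem commute_spinFlip_uB (b : ℝ) : Commute (spinFlip n) (uB n b) :=
  (commute_spinFlip_hamB.smul_right _).exp_right

theorem commute_spinFlip_uC (G : SimpleGraph (Fin n)) [DecidableRel G.Adj] (g : ℝ) :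
    Commute (spinFlip n) (uC n G g) :=
  ((commute_spinFlip_hamC G).smul_right _).exp_right

theorem spinFlip_mulVec_plusState : spinFlip n *ᵥ plusState n = plusState n := by
  unfold plusState
  rw [spinFlip, piKron_mulVec_const]
  simp only [sum_pauliX_apply, Finset.prod_const_one, one_mul]

theorem uB_add (b c : ℝ) : uB n (b + c) = uB n b * uB n c := by
  rw [uB, uB, uB, ← Matrix.exp_add_of_commute _ _ (((Commute.refl _).smul_left _).smul_right _),
    ← add_smul, ofReal_add, mul_add]

open scoped Norms.Operator in
theorem exp_I_mul_pi_div_two_smul_sigmaX (i : Fin n) :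
    NormedSpace.exp ((I * ((Real.pi / 2 : ℝ) : ℂ)) • sigmaX i) = I • sigmaX i :=
  exp_I_mul_pi_div_two_smul_of_mul_self_eq_one (sigmaX_mul_self i)

theorem uB_pi_div_two : uB n (Real.pi / 2) = I ^ n • spinFlip n := by
  have hsum : (-I * ((Real.pi / 2 : ℝ) : ℂ)) • hamB n =
      ∑ i, (I * ((Real.pi / 2 : ℝ) : ℂ)) • sigmaX i := by
    rw [hamB, smul_neg, ← neg_smul, neg_mul, neg_neg, Finset.smul_sum]
  rw [uB, hsum, Matrix.exp_sum_of_commute _ _ fun i _ j _ _ =>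
    ((commute_sigmaX i j).smul_left _).smul_right _]
  refine (Finset.noncommProd_congr rfl (fun i _ =>
    (exp_I_mul_pi_div_two_smul_sigmaX i).trans (pauliAt_smul I pauliX i).symm) _).trans ?_
  rw [noncommProd_pauliAt, spinFlip, ← Fin.prod_const, ← piKron_smul]
  rfl

end SpinFlip

section Circuit

variable {n : ℕ} (G : SimpleGraph (Fin n)) [DecidableRel G.Adj] {p : ℕ} (β γ : Fin p → ℝ)

theorem commute_spinFlip_qaoaLayer (m : ℕ) : Commute (spinFlip n) (qaoaLayer n G β γ m) := by
  unfold qaoaLayer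
  split
  · exact (commute_spinFlip_uB _).mul_right (commute_spinFlip_uC G _)
  · exact Commute.one_right _

theorem commute_spinFlip_uProd (a len : ℕ) : Commute (spinFlip n) (uProd n G β γ a len) := by
  refine Commute.list_prod_right _ _ fun x hx => ?_
  obtain ⟨m, -, rfl⟩ := List.mem_map.mp hx
  exact commute_spinFlip_qaoaLayer G β γ m

theorem uProd_succ (a len : ℕ) :
    uProd n G β γ a (len + 1) = qaoaLayer n G β γ (a + len) * uProd n G β γ a len := by
  simp [uProd, List.range'_concat]

theorem qaoaLayer_update_of_ne {l : Fin p} {m : ℕ} (hm : m ≠ l) (x : ℝ) :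
    qaoaLayer n G (Function.update β l x) γ m = qaoaLayer n G β γ m := by
  unfold qaoaLayer
  split
  · rw [Function.update_of_ne (Fin.ne_of_val_ne hm)]
  · rfl

theorem qaoaLayer_update_add_pi_div_two (l : Fin p) :
    qaoaLayer n G (Function.update β l (β l + Real.pi / 2)) γ l =
      qaoaLayer n G β γ l * (I ^ n • spinFlip n) := by
  simp only [qaoaLayer, dif_pos l.isLt, Fin.eta, Function.update_self]
  rw [uB_add, uB_pi_div_two, mul_assoc, mul_assoc,
    (((commute_spinFlip_uC G (γ l)).smul_left (I ^ n))).eq]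

theorem uProd_update_add_pi_div_two (l : Fin p) (len : ℕ) :
    uProd n G (Function.update β l (β l + Real.pi / 2)) γ 0 len =
      uProd n G β γ 0 len * if (l : ℕ) < len then I ^ n • spinFlip n else 1 := by
  induction len with
  | zero => simp [uProd]
  | succ k ih =>
    rw [uProd_succ, uProd_succ, ih, zero_add]
    by_cases hk : k = l
    · subst hk
      rw [if_neg (lt_irrefl _), if_pos (Nat.lt_succ_self _), mul_one,
        qaoaLayer_update_add_pi_div_two, mul_assoc, mul_assoc,
        ((commute_spinFlip_uProd G β γ 0 l).smul_left (I ^ n)).eq]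
    · have hlt : (l : ℕ) < k + 1 ↔ (l : ℕ) < k := by omega
      simp only [qaoaLayer_update_of_ne G β γ hk, mul_assoc, hlt]

theorem qaoaState_update_add_pi_div_two (l : Fin p) :
    qaoaState n G (Function.update β l (β l + Real.pi / 2)) γ = I ^ n • qaoaState n G β γ := by
  rw [qaoaState, qaoaState, uProd_update_add_pi_div_two, if_pos l.isLt, ← mulVec_mulVec,
    smul_mulVec, spinFlip_mulVec_plusState, mulVec_smul]

end Circuit

theorem star_smul_dotProduct_mulVec_smul {m R : Type*} [Fintype m] [CommRing R] [StarRing R]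
    {c : R} (hc : star c * c = 1) (A : Matrix m m R) (v : m → R) :
    star (c • v) ⬝ᵥ A *ᵥ (c • v) = star v ⬝ᵥ A *ᵥ v := by
  rw [star_smul, mulVec_smul, smul_dotProduct, dotProduct_smul, smul_smul, hc, one_smul]

theorem star_I_pow_mul_I_pow (n : ℕ) : star (I ^ n) * I ^ n = 1 := by
  rw [star_pow, ← mul_pow, star_def, conj_I, neg_mul, I_mul_I, neg_neg, one_pow]

theorem stmt15_general (n : ℕ) (G : SimpleGraph (Fin n)) [DecidableRel G.Adj]
    (p : ℕ) (β γ : Fin p → ℝ) (l : Fin p) :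
    energyE n G p (Function.update β l (β l + Real.pi / 2), γ) = energyE n G p (β, γ) := by
  rw [energyE, energyE, qaoaState_update_add_pi_div_two,
    star_smul_dotProduct_mulVec_smul (star_I_pow_mul_I_pow n)]

/-- π/2-shift symmetry of the QAOA cost function in the mixing angles. -/
theorem stmt15 (n : ℕ) (hn : 1 ≤ n) (G : SimpleGraph (Fin n)) [DecidableRel G.Adj]
    (p : ℕ) (hp : 1 ≤ p) (β γ : Fin p → ℝ) (l : Fin p) :
    energyE n G p (Function.update β l (β l + Real.pi / 2), γ) = energyE n G p (β, γ) :=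
  stmt15_general n G p β γ l
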